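/- Let k ≥ t ≥ 2 and λ ≥ 1 be integers, and let ℓ be the least integer such that (t-1)·C(ℓ, λ) > k. If ℓ·k - (t-1)·C(ℓ, λ+1) ≤ λ·v < ((λ+1)/(λ+2))·(ℓ+1)·k - ((t-1)/(λ+2))·C(ℓ+1, λ+1), then PDN_λ(v,k,t) = ℓ. -/

import Mathlib

open scoped Classical

/-- A packing design PD_λ(v,k,t): a multiset of k-subsets of `Fin v` such that
every t-subset of points is contained in at most λ blocks. -/
def IsPD (v k t lam : ℕ) (B : Multiset (Finset (Fin v))) : Prop :=
  (∀ b ∈ B, b.card = k) ∧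
  ∀ T : Finset (Fin v), T.card = t → B.countP (fun b => T ⊆ b) ≤ lam

/-- Frequency of a point: the number of blocks (with multiplicity) containing it. -/
def freq {v : ℕ} (B : Multiset (Finset (Fin v))) (x : Fin v) : ℕ :=
  B.countP (fun b => x ∈ b)


/-- The packing number PDN_λ(v,k,t): the maximum number of blocks of a PD_λ(v,k,t). -/
noncomputable def PDN (v k t lam : ℕ) : ℕ :=
  sSup {n | ∃ B : Multiset (Finset (Fin v)), IsPD v k t lam B ∧ Multiset.card B = n}

/-!
Upper bound: in a packing with `ℓ + 1` blocks of size `k`, any `λ + 1` blocks meet in at most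
`t - 1` points. Counting pairs (point `x`, `(λ+1)`-set of blocks through `x`) therefore gives
`∑ₓ C(rₓ, λ+1) ≤ (t-1)·C(ℓ+1, λ+1)`, where `rₓ` is the number of blocks through `x` and
`∑ₓ rₓ = (ℓ+1)·k`. The linear bound `C(r, λ+1) ≥ (λ+1)·r - λ(λ+2)` turns this into the negation of
the second inequality.

Lower bound: describe a design on `ℓ` blocks by the set of blocks through each point. Give every
`(λ+1)`-set of blocks to `t - 1` points and spread the remaining `k - (t-1)·C(ℓ-1, λ)` points of each
block over the other `v - (t-1)·C(ℓ, λ+1)` points, at most `λ` blocks per point; the first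
inequality says exactly that there is room for this. The points of a `t`-set lying in `λ + 1`
common blocks would all carry the same `(λ+1)`-set of blocks, and only `t - 1` points do.
-/

open Finset

theorem Multiset.exists_fin_map_eq {α : Type*} (M : Multiset α) {n : ℕ} (h : M.card = n) :
    ∃ g : Fin n → α, univ.val.map g = M := by
  subst h
  refine ⟨fun x => M.toList.get (x.cast (by simp)), ?_⟩
  rw [Fin.univ_val_map]
  conv_rhs => rw [← M.coe_toList]
  congr 1
  exact List.ext_get (by simp) fun _ _ _ => by simp

theorem Multiset.exists_le_card_eq {α : Type*} {B : Multiset α} {n : ℕ} (h : n ≤ B.card) :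
    ∃ S ≤ B, S.card = n := by
  obtain ⟨S, hS⟩ := Multiset.card_pos_iff_exists_mem.mp
    (by rw [Multiset.card_powersetCard]; exact Nat.choose_pos h : 0 < (B.powersetCard n).card)
  exact ⟨S, Multiset.mem_powersetCard.mp hS⟩

theorem Nat.add_one_mul_le_choose_add (lam f : ℕ) :
    (lam + 1) * f ≤ f.choose (lam + 1) + lam * (lam + 2) := by
  rcases le_or_gt f lam with hf | hf
  · nlinarith
  induction f, hf using Nat.le_induction with
  | base => simp only [Nat.choose_self]; nlinarith
  | succ f hf ih =>
    have : lam + 1 ≤ f.choose lam := by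
      simpa using Nat.choose_le_choose lam (show lam + 1 ≤ f from hf)
    rw [Nat.choose_succ_succ]
    nlinarith

section Packing

variable {ι α : Type*} [Fintype ι] [Fintype α] [DecidableEq α] {t lam : ℕ} {b : ι → Finset α}

theorem sum_card_filter_mem_eq_sum_card :
    ∑ x : α, #{j | x ∈ b j} = ∑ j, #(b j) := by
  have := sum_card_bipartiteAbove_eq_sum_card_bipartiteBelow (s := (univ : Finset α))
    (t := (univ : Finset ι)) (fun x j => x ∈ b j)
  simpa [bipartiteAbove, bipartiteBelow] using this

theorem card_inter_le_of_packing (hb : ∀ T : Finset α, #T = t → #{j | T ⊆ b j} ≤ lam)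
    {A : Finset ι} (hA : #A = lam + 1) : #{x | ∀ j ∈ A, x ∈ b j} ≤ t - 1 := by
  by_contra! h
  obtain ⟨T, hT, hTcard⟩ := exists_subset_card_eq (show t ≤ #{x | ∀ j ∈ A, x ∈ b j} by omega)
  have : A ⊆ ({j | T ⊆ b j} : Finset ι) := fun j hj => by
    simp only [mem_filter, mem_univ, true_and]
    exact fun x hx => (mem_filter.mp (hT hx)).2 j hj
  have := card_le_card this
  have := hb T hTcard
  omega

theorem sum_choose_card_filter_mem_le (hb : ∀ T : Finset α, #T = t → #{j | T ⊆ b j} ≤ lam) :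
    ∑ x : α, (#{j | x ∈ b j}).choose (lam + 1) ≤ (t - 1) * (Fintype.card ι).choose (lam + 1) := by
  calc ∑ x : α, (#{j | x ∈ b j}).choose (lam + 1)
      = ∑ x : α, #{A ∈ powersetCard (lam + 1) univ | ∀ j ∈ A, x ∈ b j} := by
        refine sum_congr rfl fun x _ => ?_
        rw [← card_powersetCard]
        congr 1
        ext A
        simp [mem_powersetCard, subset_iff, and_comm]
    _ = ∑ A ∈ powersetCard (lam + 1) univ, #{x | ∀ j ∈ A, x ∈ b j} := by
        have := sum_card_bipartiteAbove_eq_sum_card_bipartiteBelow (s := (univ : Finset α))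
          (t := powersetCard (lam + 1) (univ : Finset ι)) (fun x A => ∀ j ∈ A, x ∈ b j)
        simpa [bipartiteAbove, bipartiteBelow] using this
    _ ≤ ∑ _A ∈ powersetCard (lam + 1) (univ : Finset ι), (t - 1) :=
        sum_le_sum fun A hA => card_inter_le_of_packing hb (mem_powersetCard.mp hA).2
    _ = (t - 1) * (Fintype.card ι).choose (lam + 1) := by
        rw [sum_const, card_powersetCard, card_univ, smul_eq_mul, mul_comm]

theorem add_one_mul_card_mul_le_of_packing {k : ℕ} (hk : ∀ j, #(b j) = k)
    (hb : ∀ T : Finset α, #T = t → #{j | T ⊆ b j} ≤ lam) :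
    (lam + 1) * (Fintype.card ι * k) ≤
      (t - 1) * (Fintype.card ι).choose (lam + 1) + lam * (lam + 2) * Fintype.card α := by
  calc (lam + 1) * (Fintype.card ι * k) = ∑ x : α, (lam + 1) * #{j | x ∈ b j} := by
        rw [← mul_sum, sum_card_filter_mem_eq_sum_card]
        simp [hk]
    _ ≤ ∑ x : α, ((#{j | x ∈ b j}).choose (lam + 1) + lam * (lam + 2)) :=
        sum_le_sum fun x _ => Nat.add_one_mul_le_choose_add lam _
    _ ≤ _ := by
        rw [sum_add_distrib, sum_const, card_univ, smul_eq_mul, mul_comm (Fintype.card α)]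
        gcongr
        exact sum_choose_card_filter_mem_le hb

end Packing

theorem IsPD.card_le {v k t lam ℓ : ℕ} {B : Multiset (Finset (Fin v))} (hB : IsPD v k t lam B)
    (ht : 1 ≤ t) (h : ((lam : ℤ) + 2) * lam * v
        < (lam + 1) * (ℓ + 1) * k - (t - 1) * ((ℓ + 1).choose (lam + 1))) :
    Multiset.card B ≤ ℓ := by
  by_contra! hlt
  obtain ⟨S, hSB, hScard⟩ := Multiset.exists_le_card_eq (Nat.succ_le_of_lt hlt)
  obtain ⟨b, rfl⟩ := S.exists_fin_map_eq hScard
  have hk (j : Fin (ℓ + 1)) : #(b j) = k :=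
    hB.1 _ (Multiset.mem_of_le hSB (Multiset.mem_map_of_mem _ (mem_univ_val j)))
  have hpack (T : Finset (Fin v)) (hT : #T = t) : #{j | T ⊆ b j} ≤ lam := by
    have := (Multiset.countP_le_of_le _ hSB).trans (hB.2 T hT)
    rwa [Multiset.countP_map] at this
  have hcount := add_one_mul_card_mul_le_of_packing hk hpack
  simp only [Fintype.card_fin] at hcount
  zify [ht] at hcount
  linarith

/-- `M` lists, for each point, the set of blocks through it. -/
theorem exists_isPD_of_signatures {v k t lam ℓ : ℕ} (M : Multiset (Finset (Fin ℓ)))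
    (hv : M.card = v) (hdeg : ∀ i, M.countP (i ∈ ·) = k) (hsize : ∀ A ∈ M, #A ≤ lam + 1)
    (hmult : ∀ A : Finset (Fin ℓ), #A = lam + 1 → M.count A < t) :
    ∃ B : Multiset (Finset (Fin v)), IsPD v k t lam B ∧ Multiset.card B = ℓ := by
  obtain ⟨g, rfl⟩ := M.exists_fin_map_eq hv
  refine ⟨univ.val.map fun i => univ.filter (i ∈ g ·), ⟨?_, fun T hT => ?_⟩, by simp⟩
  · simp only [Multiset.mem_map, mem_univ_val, true_and, forall_exists_index,
      forall_apply_eq_imp_iff]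
    intro i
    rw [← hdeg i, Multiset.countP_map]
    rfl
  rw [Multiset.countP_map]
  by_contra! h
  obtain ⟨I, hI, hIcard⟩ := exists_subset_card_eq
    (show lam + 1 ≤ #{i | T ⊆ univ.filter (i ∈ g ·)} from h)
  have hT : T ⊆ ({x | I = g x} : Finset (Fin v)) := fun x hx => by
    have hIx : I ⊆ g x := fun i hi => (mem_filter.mp ((mem_filter.mp (hI hi)).2 hx)).2
    have := hsize (g x) (Multiset.mem_map_of_mem _ (mem_univ_val x))
    simpa using eq_of_subset_of_card_le hIx (by omega)
  have hIt : #{x | I = g x} < t := by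
    have := hmult I hIcard
    rwa [Multiset.count_map] at this
  have := card_le_card hT
  omega

theorem Finset.card_filter_mem_powersetCard_succ {α : Type*} [DecidableEq α] {s : Finset α}
    {i : α} (hi : i ∈ s) (n : ℕ) :
    #{A ∈ powersetCard (n + 1) s | i ∈ A} = (#s - 1).choose n := by
  have : {A ∈ powersetCard (n + 1) s | i ∈ A} = (powersetCard n (s.erase i)).image (insert i) := by
    ext A
    simp only [mem_filter, mem_powersetCard, mem_image]
    constructor
    · rintro ⟨⟨hAs, hAcard⟩, hiA⟩
      exact ⟨A.erase i, ⟨erase_subset_erase i hAs, by rw [card_erase_of_mem hiA, hAcard]; rfl⟩,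
        insert_erase hiA⟩
    · rintro ⟨B, ⟨hBs, hBcard⟩, rfl⟩
      have hiB : i ∉ B := fun h => notMem_erase i s (hBs h)
      exact ⟨⟨insert_subset hi (hBs.trans (erase_subset i s)), by rw [card_insert_of_notMem hiB,
        hBcard]⟩, mem_insert_self i B⟩
  rw [this, card_image_of_injOn, card_powersetCard, card_erase_of_mem hi]
  intro A hA B hB hAB
  have hiA : i ∉ A := fun h => notMem_erase i s ((mem_powersetCard.mp hA).1 h)
  have hiB : i ∉ B := fun h => notMem_erase i s ((mem_powersetCard.mp hB).1 h)
  rw [← erase_insert hiA, hAB, erase_insert hiB]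

theorem Nat.eq_of_div_eq_of_modEq {lam ℓ s s' : ℕ} (hlam : 0 < lam) (hlamℓ : lam ≤ ℓ)
    (hdiv : s / lam = s' / lam) (hmod : s ≡ s' [MOD ℓ]) : s = s' := by
  refine hmod.eq_of_abs_lt (abs_sub_lt_iff.mpr ?_)
  have := Nat.div_mul_le_self s lam
  have := Nat.div_mul_le_self s' lam
  have := Nat.lt_div_mul_add (a := s) hlam
  have := Nat.lt_div_mul_add (a := s') hlam
  rw [hdiv] at *
  omega

theorem card_filter_range_mul_ofNat_eq {ℓ : ℕ} [NeZero ℓ] (r : ℕ) (i : Fin ℓ) :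
    #{s ∈ range (ℓ * r) | Fin.ofNat ℓ s = i} = r := by
  have hℓ : 0 < ℓ := Nat.pos_of_neZero ℓ
  have := Nat.count_modEq_card (ℓ * r) hℓ i
  rw [Nat.count_eq_card_filter_range, Nat.mul_mod_right, Nat.mul_div_cancel_left r hℓ] at this
  simpa [Fin.ext_iff, Nat.ModEq, Nat.mod_eq_of_lt i.isLt] using this

/-- Of the slots `0, …, ℓ * r - 1`, point `p` takes the `λ` consecutive ones with `s / λ = p`, and
slot `s` lies in block `s mod ℓ`; so each point gets at most `λ` blocks and each block `r` points. -/
def windows (lam ℓ r m : ℕ) [NeZero ℓ] : Multiset (Finset (Fin ℓ)) :=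
  (range m).val.map fun p => {s ∈ range (ℓ * r) | s / lam = p}.image (Fin.ofNat ℓ)

section Windows

variable {lam ℓ r m : ℕ} [NeZero ℓ]

@[simp]
theorem card_windows : (windows lam ℓ r m).card = m := by
  simp [windows]

theorem card_le_of_mem_windows (hlam : 0 < lam) {A : Finset (Fin ℓ)}
    (hA : A ∈ windows lam ℓ r m) : #A ≤ lam := by
  obtain ⟨p, -, rfl⟩ := Multiset.mem_map.mp hA
  calc _ ≤ #{s ∈ range (ℓ * r) | s / lam = p} := card_image_le
    _ ≤ #(Ico (p * lam) (p * lam + lam)) := card_le_card fun s hs => by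
        obtain rfl := (mem_filter.mp hs).2
        exact mem_Ico.mpr ⟨Nat.div_mul_le_self s lam, Nat.lt_div_mul_add hlam⟩
    _ = lam := by simp

theorem countP_mem_windows (hlam : 0 < lam) (hlamℓ : lam ≤ ℓ) (hm : ℓ * r ≤ lam * m)
    (i : Fin ℓ) : (windows lam ℓ r m).countP (i ∈ ·) = r := by
  rw [windows, Multiset.countP_map, ← filter_val]
  change #_ = r
  have : {p ∈ range m | i ∈ {s ∈ range (ℓ * r) | s / lam = p}.image (Fin.ofNat ℓ)} =
      {s ∈ range (ℓ * r) | Fin.ofNat ℓ s = i}.image (· / lam) := by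
    ext p
    simp only [mem_filter, mem_range, mem_image]
    constructor
    · rintro ⟨-, s, ⟨hs, rfl⟩, rfl⟩
      exact ⟨s, ⟨hs, rfl⟩, rfl⟩
    · rintro ⟨s, ⟨hs, rfl⟩, rfl⟩
      exact ⟨(Nat.div_lt_iff_lt_mul hlam).mpr (by nlinarith), s, ⟨hs, rfl⟩, rfl⟩
  rw [this, card_image_of_injOn, card_filter_range_mul_ofNat_eq]
  intro s hs s' hs' hdiv
  refine Nat.eq_of_div_eq_of_modEq hlam hlamℓ hdiv ?_
  simp only [coe_filter, Set.mem_ofPred_eq] at hs hs'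
  rw [Nat.ModEq, ← Fin.val_ofNat, ← Fin.val_ofNat, hs.2, hs'.2]

end Windows

theorem exists_isPD_card_eq {v k t lam ℓ : ℕ} (hlam : 0 < lam) (hℓ : lam < ℓ) (ht : 1 ≤ t)
    (hk : (t - 1) * (ℓ - 1).choose lam ≤ k)
    (hv : ℓ * k ≤ lam * v + (t - 1) * ℓ.choose (lam + 1)) :
    ∃ B : Multiset (Finset (Fin v)), IsPD v k t lam B ∧ Multiset.card B = ℓ := by
  have : NeZero ℓ := ⟨by omega⟩
  have hid : ℓ * (ℓ - 1).choose lam = (lam + 1) * ℓ.choose (lam + 1) := by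
    have := Nat.add_one_mul_choose_eq (ℓ - 1) lam
    rwa [Nat.sub_add_cancel (by omega : 1 ≤ ℓ), mul_comm _ (lam + 1)] at this
  set N := ℓ.choose (lam + 1)
  set C := (ℓ - 1).choose lam
  set X := (t - 1) * C
  set Y := (t - 1) * N
  have hXY : ℓ * X = lam * Y + Y := by
    simp only [X, Y]
    rw [mul_left_comm, hid]
    ring
  have hkX : ℓ * X ≤ ℓ * k := Nat.mul_le_mul_left ℓ hk
  have hYv : Y ≤ v := Nat.le_of_mul_le_mul_left (by omega) hlam
  have hwin : ℓ * (k - X) ≤ lam * (v - Y) := by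
    rw [Nat.mul_sub, Nat.mul_sub]
    omega
  let E := (powersetCard (lam + 1) (univ : Finset (Fin ℓ))).val
  refine exists_isPD_of_signatures ((t - 1) • E + windows lam ℓ (k - X) (v - Y))
    ?_ (fun i => ?_) (fun A hA => ?_) (fun A hA => ?_)
  · simpa [E] using Nat.add_sub_cancel' hYv
  · rw [Multiset.countP_add, Multiset.countP_nsmul, countP_mem_windows hlam hℓ.le hwin,
      Multiset.countP_eq_card_filter, ← filter_val, card_val,
      card_filter_mem_powersetCard_succ (mem_univ i), card_univ, Fintype.card_fin]
    exact Nat.add_sub_cancel' hk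
  · rcases Multiset.mem_add.mp hA with hA | hA
    · exact (mem_powersetCard.mp (Multiset.mem_of_mem_nsmul hA)).2.le
    · exact (card_le_of_mem_windows hlam hA).trans (Nat.le_succ lam)
  · have hE : E.count A ≤ 1 := Multiset.nodup_iff_count_le_one.mp (nodup _) A
    have hW : (windows lam ℓ (k - X) (v - Y)).count A = 0 :=
      Multiset.count_eq_zero.mpr fun h => by have := card_le_of_mem_windows hlam h; omega
    rw [Multiset.count_add, Multiset.count_nsmul, hW]
    have := Nat.mul_le_mul_left (t - 1) hE
    omega

theorem stmt12 (v k t lam ℓ : ℕ) (ht : 2 ≤ t) (htk : t ≤ k) (hlam : 1 ≤ lam)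
    (hl1 : k < (t - 1) * ℓ.choose lam)
    (hl2 : ∀ m < ℓ, (t - 1) * m.choose lam ≤ k)
    (h1 : (ℓ * k : ℤ) - (t - 1) * (ℓ.choose (lam + 1)) ≤ lam * v)
    (h2 : ((lam : ℤ) + 2) * lam * v
        < (lam + 1) * (ℓ + 1) * k - (t - 1) * ((ℓ + 1).choose (lam + 1))) :
    PDN v k t lam = ℓ := by
  have ht1 : 1 ≤ t := by omega
  have hℓ : lam < ℓ := by
    by_contra! h
    have : ℓ.choose lam ≤ 1 := by
      rcases h.lt_or_eq with h | rfl
      · simp [Nat.choose_eq_zero_of_lt h]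
      · simp
    have := Nat.mul_le_mul_left (t - 1) this
    omega
  have hv : ℓ * k ≤ lam * v + (t - 1) * ℓ.choose (lam + 1) := by
    zify [ht1]
    linarith
  obtain ⟨B, hB, hcard⟩ := exists_isPD_card_eq hlam hℓ ht1 (hl2 _ (by omega)) hv
  refine IsGreatest.csSup_eq ⟨⟨B, hB, hcard⟩, ?_⟩
  rintro _ ⟨B', hB', rfl⟩
  exact hB'.card_le ht1 h2
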